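/- arXiv:0808.0350 — 4 statements merged into one kernel-verified Lean document; each statement's English description precedes it below -/
import Mathlib

section
/- Let X be a topological space, let f : X → X be a topologically transitive homeomorphism, and let A : X → GL(m,ℝ). If C : X → GL(m,ℝ) and C' : X → GL(m,ℝ) are continuous functions both satisfying A(x) = C(f x)·C(x)^{−1} and A(x) = C'(f x)·C'(x)^{−1} for all x ∈ X, then there exists a matrix B ∈ GL(m,ℝ) such that C'(x) = C(x)·B for all x ∈ X. -/
noncomputable section

/-- The ℓ² operator norm of a square real matrix. -/
def opNorm {m : ℕ} (M : Matrix (Fin m) (Fin m) ℝ) : ℝ :=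
  ‖Matrix.toEuclideanCLM (𝕜 := ℝ) M‖

/-- The metric `d_G(A,B) = ‖A − B‖ + ‖A⁻¹ − B⁻¹‖` on `GL(m,ℝ)`. -/
def dG {m : ℕ} (A B : GL (Fin m) ℝ) : ℝ :=
  opNorm ((A : Matrix (Fin m) (Fin m) ℝ) - (B : Matrix (Fin m) (Fin m) ℝ)) +
    opNorm (((A⁻¹ : GL (Fin m) ℝ) : Matrix (Fin m) (Fin m) ℝ) -
      ((B⁻¹ : GL (Fin m) ℝ) : Matrix (Fin m) (Fin m) ℝ))

/-- The cocycle generated by `A` over `f`: `coc f A x n = A(f^{n-1}x) ⋯ A(fx) A(x)`. -/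
def coc {X : Type*} {m : ℕ} (f : X → X) (A : X → GL (Fin m) ℝ) (x : X) : ℕ → GL (Fin m) ℝ
  | 0 => 1
  | n + 1 => A (f^[n] x) * coc f A x n

/-- Extension of the cocycle to `ℤ`: `cocZ f A x (−n) = (coc f A (f^{−n} x) n)⁻¹`. -/
def cocZ {X : Type*} [TopologicalSpace X] {m : ℕ} (f : X ≃ₜ X) (A : X → GL (Fin m) ℝ)
    (x : X) : ℤ → GL (Fin m) ℝ
  | (n : ℕ) => coc (⇑f) A x n
  | Int.negSucc n => (coc (⇑f) A ((⇑f.symm)^[n + 1] x) (n + 1))⁻¹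

/-- The `k`-th iterate (`k ∈ ℤ`) of a homeomorphism. -/
def iterZ {X : Type*} [TopologicalSpace X] (f : X ≃ₜ X) : ℤ → X → X
  | (n : ℕ) => (⇑f)^[n]
  | Int.negSucc n => (⇑f.symm)^[n + 1]

/-- `A` is α-Hölder continuous (with respect to the operator norm on matrices). -/
def IsHolder {X : Type*} [MetricSpace X] {m : ℕ} (A : X → GL (Fin m) ℝ) (α : ℝ) : Prop :=
  ∃ C : ℝ, ∀ x y : X,
    opNorm ((A x : Matrix (Fin m) (Fin m) ℝ) - (A y : Matrix (Fin m) (Fin m) ℝ))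
      ≤ C * dist x y ^ α

/-- The closing property with constants `c, lam, δ₀`: for any `x` and `n > 0` with
`dist(x, fⁿx) < δ₀` there are `p, y` with `fⁿp = p` such that, with `δ = c·dist(x, fⁿx)`,
for every `i = 0, …, n`: `dist(fⁱx, fⁱp) ≤ δ·exp(−λ·min{i,n−i})`,
`dist(fⁱp, fⁱy) ≤ δ·exp(−λi)` and `dist(fⁱy, fⁱx) ≤ δ·exp(−λ(n−i))`. -/
def ClosingAt {X : Type*} [MetricSpace X] (f : X ≃ₜ X) (c lam δ₀ : ℝ) : Prop :=
  ∀ x : X, ∀ n : ℕ, 0 < n → dist x ((⇑f)^[n] x) < δ₀ →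
    ∃ p y : X, (⇑f)^[n] p = p ∧ ∀ i ≤ n,
      dist ((⇑f)^[i] x) ((⇑f)^[i] p)
          ≤ c * dist x ((⇑f)^[n] x) * Real.exp (-(lam * (min i (n - i) : ℕ))) ∧
      dist ((⇑f)^[i] p) ((⇑f)^[i] y)
          ≤ c * dist x ((⇑f)^[n] x) * Real.exp (-(lam * i)) ∧
      dist ((⇑f)^[i] y) ((⇑f)^[i] x)
          ≤ c * dist x ((⇑f)^[n] x) * Real.exp (-(lam * ((n - i : ℕ) : ℝ)))

/-- The closing property: `ClosingAt` holds for some positive constants. -/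
def ClosingProperty {X : Type*} [MetricSpace X] (f : X ≃ₜ X) : Prop :=
  ∃ c lam δ₀ : ℝ, 0 < c ∧ 0 < lam ∧ 0 < δ₀ ∧ ClosingAt f c lam δ₀

/-- Topological transitivity: some point has a dense (two-sided) orbit. -/
def TopTransitive {X : Type*} [TopologicalSpace X] (f : X ≃ₜ X) : Prop :=
  ∃ z : X, Dense (Set.range fun k : ℤ => iterZ f k z)

/-- `ρ ∈ ℂ` is an eigenvalue of the real matrix `M` (a root of its characteristic
polynomial over `ℂ`). -/
def IsEigen {m : ℕ} (M : Matrix (Fin m) (Fin m) ℝ) (ρ : ℂ) : Prop :=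
  ((M.map Complex.ofReal).charpoly).IsRoot ρ

/-- The maximum of `|ρ|` over the complex eigenvalues `ρ` of `M` (the spectral radius). -/
def maxAbsEigen {m : ℕ} (M : Matrix (Fin m) (Fin m) ℝ) : ℝ :=
  sSup {r : ℝ | ∃ ρ : ℂ, IsEigen M ρ ∧ r = ‖ρ‖}

/-- The minimum of `|ρ|` over the complex eigenvalues `ρ` of `M`. -/
def minAbsEigen {m : ℕ} (M : Matrix (Fin m) (Fin m) ℝ) : ℝ :=
  sInf {r : ℝ | ∃ ρ : ℂ, IsEigen M ρ ∧ r = ‖ρ‖}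

/-- The β-closing property with constants `c, lam, δ₀`, i.e. the closing property with
`δ = c · dist(x, fⁿx)^β` in place of `δ = c · dist(x, fⁿx)`. -/
def ClosingAtβ {X : Type*} [MetricSpace X] (f : X ≃ₜ X) (β c lam δ₀ : ℝ) : Prop :=
  ∀ x : X, ∀ n : ℕ, 0 < n → dist x ((⇑f)^[n] x) < δ₀ →
    ∃ p y : X, (⇑f)^[n] p = p ∧ ∀ i ≤ n,
      dist ((⇑f)^[i] x) ((⇑f)^[i] p)
          ≤ c * dist x ((⇑f)^[n] x) ^ β * Real.exp (-(lam * (min i (n - i) : ℕ))) ∧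
      dist ((⇑f)^[i] p) ((⇑f)^[i] y)
          ≤ c * dist x ((⇑f)^[n] x) ^ β * Real.exp (-(lam * i)) ∧
      dist ((⇑f)^[i] y) ((⇑f)^[i] x)
          ≤ c * dist x ((⇑f)^[n] x) ^ β * Real.exp (-(lam * ((n - i : ℕ) : ℝ)))

/-! `(C x)⁻¹ * C' x` is a continuous `f`-invariant function, hence constant on the dense orbit
and therefore everywhere. -/

theorem inv_mul_eq_inv_mul_of_eq_mul_inv {G : Type*} [Group G] {a b b' c c' : G}
    (hb : a = b' * b⁻¹) (hc : a = c' * c⁻¹) : b'⁻¹ * c' = b⁻¹ * c := by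
  rw [eq_mul_inv_iff_mul_eq] at hb hc
  rw [← hb, ← hc, mul_inv_rev, mul_assoc, inv_mul_cancel_left]

theorem iterZ_invariant {X Y : Type*} [TopologicalSpace X] {f : X ≃ₜ X} {g : X → Y}
    (hg : ∀ x, g (f x) = g x) (k : ℤ) (x : X) : g (iterZ f k x) = g x := by
  have hsemi : Function.Semiconj g f id := hg
  have hsemi_symm : Function.Semiconj g f.symm id := fun x => by
    simpa using (hg (f.symm x)).symm
  cases k with
  | ofNat n => simpa [iterZ] using hsemi.iterate_right n x
  | negSucc n => simpa [iterZ] using hsemi_symm.iterate_right (n + 1) x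

theorem TopTransitive.exists_eq_const_of_invariant {X Y : Type*} [TopologicalSpace X]
    [TopologicalSpace Y] [T2Space Y] {f : X ≃ₜ X} (htrans : TopTransitive f) {g : X → Y}
    (hcont : Continuous g) (hg : ∀ x, g (f x) = g x) : ∃ c, ∀ x, g x = c := by
  obtain ⟨z, hz⟩ := htrans
  refine ⟨g z, congrFun (Continuous.ext_on hz hcont continuous_const ?_)⟩
  rintro _ ⟨k, rfl⟩
  exact iterZ_invariant hg k z

/-- **Uniqueness of the transfer function up to translation.** Two continuous solutions
`C, C'` of `A(x) = C(fx)·C(x)⁻¹` over a topologically transitive homeomorphism differ by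
a constant right translation: `C'(x) = C(x)·B`. -/
theorem transfer_unique_up_to_translation {X : Type*} [TopologicalSpace X] (f : X ≃ₜ X)
    (htrans : TopTransitive f) {m : ℕ} (A C C' : X → GL (Fin m) ℝ)
    (hC : Continuous C) (hC' : Continuous C')
    (h1 : ∀ x : X, A x = C (f x) * (C x)⁻¹)
    (h2 : ∀ x : X, A x = C' (f x) * (C' x)⁻¹) :
    ∃ B : GL (Fin m) ℝ, ∀ x : X, C' x = C x * B := by
  obtain ⟨B, hB⟩ := htrans.exists_eq_const_of_invariant (g := fun x => (C x)⁻¹ * C' x)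
    (hC.inv.mul hC') fun x => inv_mul_eq_inv_mul_of_eq_mul_inv (h1 x) (h2 x)
  exact ⟨B, fun x => by rw [← hB x, mul_inv_cancel_left]⟩
end
end

section
/- Let X be a compact metric space, let f : X → X be a homeomorphism, and let 𝒜 be the cocycle generated by an α-Hölder function A : X → GL(m,ℝ). Suppose there exist ε > 0 and c_ε > 0 such that ‖𝒜(x,n)‖ ≤ c_ε·e^{εn} and ‖𝒜(x,n)^{−1}‖ ≤ c_ε·e^{εn} for all x ∈ X and n ∈ ℕ. Then for any λ > 2ε/α there exists a constant c > 0 (depending only on A, c_ε, and αλ − 2ε) such that for any δ > 0, any n ∈ ℕ, and any points x, y ∈ X with dist(f^i x, f^i y) ≤ δ·e^{−λi} for all i = 0, …, n, one has ‖𝒜(x,n)^{−1}·𝒜(y,n) − Id‖ ≤ c·δ^α. -/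
noncomputable section

/-! A telescoping sum writes `𝒜(x,n)⁻¹𝒜(y,n) − Id` as `∑ᵢ 𝒜(x,i+1)⁻¹ (A(fⁱy) − A(fⁱx)) 𝒜(y,i)`.
The `i`-th term has norm at most `c_ε e^{ε(i+1)} · C (δ e^{−λi})^α · c_ε e^{εi}`, a constant times
`δ^α qⁱ` with `q = e^{2ε − αλ}`, and `q < 1` exactly when `λ > 2ε/α`, so the geometric series
bounds the sum by a constant times `δ^α` uniformly in `n`. -/

lemma opNorm_nonneg {m : ℕ} (M : Matrix (Fin m) (Fin m) ℝ) : 0 ≤ opNorm M := norm_nonneg _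

lemma opNorm_mul_le {m : ℕ} (M N : Matrix (Fin m) (Fin m) ℝ) :
    opNorm (M * N) ≤ opNorm M * opNorm N := by
  unfold opNorm
  rw [map_mul]
  exact norm_mul_le _ _

lemma opNorm_mul_mul_le {m : ℕ} (L M N : Matrix (Fin m) (Fin m) ℝ) :
    opNorm (L * M * N) ≤ opNorm L * opNorm M * opNorm N :=
  (opNorm_mul_le _ _).trans <|
    mul_le_mul_of_nonneg_right (opNorm_mul_le _ _) (opNorm_nonneg _)

lemma opNorm_sum_le {ι : Type*} {m : ℕ} (s : Finset ι) (g : ι → Matrix (Fin m) (Fin m) ℝ) :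
    opNorm (∑ i ∈ s, g i) ≤ ∑ i ∈ s, opNorm (g i) := by
  unfold opNorm
  rw [map_sum]
  exact norm_sum_le _ _

lemma IsHolder.exists_pos {X : Type*} [MetricSpace X] {m : ℕ} {A : X → GL (Fin m) ℝ}
    {α : ℝ} (hA : IsHolder A α) :
    ∃ C > 0, ∀ x y : X,
      opNorm ((A x : Matrix (Fin m) (Fin m) ℝ) - (A y : Matrix (Fin m) (Fin m) ℝ))
        ≤ C * dist x y ^ α := by
  obtain ⟨C, hC⟩ := hA
  refine ⟨max C 1, by positivity, fun x y => (hC x y).trans ?_⟩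
  exact mul_le_mul_of_nonneg_right (le_max_left _ _) (Real.rpow_nonneg dist_nonneg _)

section Cocycle

variable {X : Type*} {m : ℕ} (f : X → X) (A : X → GL (Fin m) ℝ)

lemma inv_coc_mul_coc_succ_sub (x y : X) (n : ℕ) :
    (((coc f A x (n + 1))⁻¹ * coc f A y (n + 1) : GL (Fin m) ℝ) : Matrix (Fin m) (Fin m) ℝ)
        - (((coc f A x n)⁻¹ * coc f A y n : GL (Fin m) ℝ) : Matrix (Fin m) (Fin m) ℝ)
      = (((coc f A x (n + 1))⁻¹ : GL (Fin m) ℝ) : Matrix (Fin m) (Fin m) ℝ)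
        * ((A (f^[n] y) : Matrix (Fin m) (Fin m) ℝ) - (A (f^[n] x) : Matrix (Fin m) (Fin m) ℝ))
        * (coc f A y n : Matrix (Fin m) (Fin m) ℝ) := by
  simp only [coc, mul_inv_rev, Units.val_mul, Matrix.sub_mul, Matrix.mul_sub, mul_assoc,
    Units.inv_mul_cancel_left]

lemma opNorm_inv_coc_mul_coc_sub_one_le_sum (x y : X) (n : ℕ) :
    opNorm ((((coc f A x n)⁻¹ * coc f A y n : GL (Fin m) ℝ) : Matrix (Fin m) (Fin m) ℝ) - 1)
      ≤ ∑ i ∈ Finset.range n,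
          opNorm (((coc f A x (i + 1))⁻¹ : GL (Fin m) ℝ) : Matrix (Fin m) (Fin m) ℝ)
          * opNorm ((A (f^[i] y) : Matrix (Fin m) (Fin m) ℝ)
              - (A (f^[i] x) : Matrix (Fin m) (Fin m) ℝ))
          * opNorm (coc f A y i : Matrix (Fin m) (Fin m) ℝ) := by
  set B : ℕ → Matrix (Fin m) (Fin m) ℝ :=
    fun i => (((coc f A x i)⁻¹ * coc f A y i : GL (Fin m) ℝ) : Matrix (Fin m) (Fin m) ℝ)
  have htelescope : B n - 1 = ∑ i ∈ Finset.range n, (B (i + 1) - B i) := by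
    rw [Finset.sum_range_sub]
    simp [B, coc]
  rw [htelescope]
  refine (opNorm_sum_le _ _).trans (Finset.sum_le_sum fun i _ => ?_)
  rw [inv_coc_mul_coc_succ_sub]
  exact opNorm_mul_mul_le _ _ _

lemma exp_mul_rpow_mul_exp_eq (ε lam α δ : ℝ) (hδ : 0 ≤ δ) (i : ℕ) :
    Real.exp (ε * ((i + 1 : ℕ) : ℝ)) * (δ * Real.exp (-(lam * i))) ^ α * Real.exp (ε * i)
      = Real.exp ε * δ ^ α * Real.exp (2 * ε - α * lam) ^ i := by
  rw [Real.mul_rpow hδ (Real.exp_nonneg _), ← Real.exp_mul, ← Real.exp_nat_mul]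
  have hexp : Real.exp (ε * ((i + 1 : ℕ) : ℝ)) * Real.exp (-(lam * i) * α) * Real.exp (ε * i)
      = Real.exp ε * Real.exp (i * (2 * ε - α * lam)) := by
    rw [← Real.exp_add, ← Real.exp_add, ← Real.exp_add]
    congr 1
    push_cast
    ring
  linear_combination δ ^ α * hexp

lemma opNorm_inv_coc_mul_coc_sub_one_le_geom_sum {α C ε cε lam δ : ℝ} [MetricSpace X]
    (hα : 0 ≤ α) (hH : ∀ x y : X,
      opNorm ((A x : Matrix (Fin m) (Fin m) ℝ) - (A y : Matrix (Fin m) (Fin m) ℝ))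
        ≤ C * dist x y ^ α) (hC : 0 ≤ C)
    (hgrow : ∀ (x : X) (n : ℕ),
      opNorm ((coc f A x n : GL (Fin m) ℝ) : Matrix (Fin m) (Fin m) ℝ)
          ≤ cε * Real.exp (ε * n) ∧
      opNorm (((coc f A x n)⁻¹ : GL (Fin m) ℝ) : Matrix (Fin m) (Fin m) ℝ)
          ≤ cε * Real.exp (ε * n))
    (hδ : 0 ≤ δ) {n : ℕ} {x y : X}
    (hxy : ∀ i ≤ n, dist (f^[i] x) (f^[i] y) ≤ δ * Real.exp (-(lam * i))) :
    opNorm ((((coc f A x n)⁻¹ * coc f A y n : GL (Fin m) ℝ) : Matrix (Fin m) (Fin m) ℝ) - 1)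
      ≤ cε ^ 2 * Real.exp ε * C * δ ^ α
          * ∑ i ∈ Finset.range n, Real.exp (2 * ε - α * lam) ^ i := by
  refine (opNorm_inv_coc_mul_coc_sub_one_le_sum f A x y n).trans ?_
  rw [Finset.mul_sum]
  refine Finset.sum_le_sum fun i hi => ?_
  have hinv := (hgrow x (i + 1)).2
  have hfwd := (hgrow y i).1
  have hdiff : opNorm ((A (f^[i] y) : Matrix (Fin m) (Fin m) ℝ)
      - (A (f^[i] x) : Matrix (Fin m) (Fin m) ℝ)) ≤ C * (δ * Real.exp (-(lam * i))) ^ α := by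
    refine (hH _ _).trans (mul_le_mul_of_nonneg_left ?_ hC)
    rw [dist_comm]
    exact Real.rpow_le_rpow dist_nonneg (hxy i (Finset.mem_range.mp hi).le) hα
  calc _ ≤ cε * Real.exp (ε * ((i + 1 : ℕ) : ℝ)) * (C * (δ * Real.exp (-(lam * i))) ^ α)
        * (cε * Real.exp (ε * i)) := by
        have hinv₀ := (opNorm_nonneg _).trans hinv
        exact mul_le_mul (mul_le_mul hinv hdiff (opNorm_nonneg _) hinv₀) hfwd (opNorm_nonneg _)
          (mul_nonneg hinv₀ ((opNorm_nonneg _).trans hdiff))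
    _ = cε ^ 2 * Real.exp ε * C * δ ^ α * Real.exp (2 * ε - α * lam) ^ i := by
        linear_combination cε ^ 2 * C * exp_mul_rpow_mul_exp_eq ε lam α δ hδ i

end Cocycle

theorem close_orbits_forward_general {X : Type*} [MetricSpace X] (f : X ≃ₜ X)
    {m : ℕ} (α : ℝ) (hα : 0 < α) (A : X → GL (Fin m) ℝ) (hH : IsHolder A α)
    (ε cε : ℝ) (hcε : 0 < cε)
    (hgrow : ∀ (x : X) (n : ℕ),
      opNorm ((coc (⇑f) A x n : GL (Fin m) ℝ) : Matrix (Fin m) (Fin m) ℝ)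
          ≤ cε * Real.exp (ε * n) ∧
      opNorm (((coc (⇑f) A x n)⁻¹ : GL (Fin m) ℝ) : Matrix (Fin m) (Fin m) ℝ)
          ≤ cε * Real.exp (ε * n))
    (lam : ℝ) (hlam : 2 * ε / α < lam) :
    ∃ c : ℝ, 0 < c ∧ ∀ δ : ℝ, 0 < δ → ∀ (n : ℕ) (x y : X),
      (∀ i ≤ n, dist ((⇑f)^[i] x) ((⇑f)^[i] y) ≤ δ * Real.exp (-(lam * i))) →
      opNorm ((((coc (⇑f) A x n)⁻¹ * coc (⇑f) A y n : GL (Fin m) ℝ) :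
        Matrix (Fin m) (Fin m) ℝ) - 1) ≤ c * δ ^ α := by
  obtain ⟨C, hC, hHC⟩ := hH.exists_pos
  set q := Real.exp (2 * ε - α * lam)
  have hq : q < 1 := by
    rw [Real.exp_lt_one_iff]
    linarith [(div_lt_iff₀ hα).mp hlam]
  set K := cε ^ 2 * Real.exp ε * C
  have hK : 0 < K := by positivity
  refine ⟨K / (1 - q), div_pos hK (sub_pos.mpr hq), fun δ hδ n x y hxy => ?_⟩
  have hgeom : ∑ i ∈ Finset.range n, q ^ i ≤ 1 / (1 - q) := by
    simpa using geom_sum_Ico_le_of_lt_one (m := 0) (n := n) (Real.exp_nonneg _) hq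
  calc _ ≤ K * δ ^ α * ∑ i ∈ Finset.range n, q ^ i :=
        opNorm_inv_coc_mul_coc_sub_one_le_geom_sum (⇑f) A hα.le hHC hC.le hgrow hδ.le hxy
    _ ≤ K * δ ^ α * (1 / (1 - q)) := by gcongr
    _ = K / (1 - q) * δ ^ α := by ring

/-- **Comparison of slowly growing cocycles along exponentially converging orbit
segments (forward version).** If `‖𝒜(x,n)‖, ‖𝒜(x,n)⁻¹‖ ≤ c_ε·e^{εn}` and
`λ > 2ε/α`, then `dist(fⁱx, fⁱy) ≤ δ·e^{−λi}` for `i = 0,…,n` implies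
`‖𝒜(x,n)⁻¹·𝒜(y,n) − Id‖ ≤ c·δ^α`. -/
theorem close_orbits_forward {X : Type*} [MetricSpace X] [CompactSpace X] (f : X ≃ₜ X)
    {m : ℕ} (α : ℝ) (hα : 0 < α) (A : X → GL (Fin m) ℝ) (hH : IsHolder A α)
    (ε cε : ℝ) (hε : 0 < ε) (hcε : 0 < cε)
    (hgrow : ∀ (x : X) (n : ℕ),
      opNorm ((coc (⇑f) A x n : GL (Fin m) ℝ) : Matrix (Fin m) (Fin m) ℝ)
          ≤ cε * Real.exp (ε * n) ∧
      opNorm (((coc (⇑f) A x n)⁻¹ : GL (Fin m) ℝ) : Matrix (Fin m) (Fin m) ℝ)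
          ≤ cε * Real.exp (ε * n))
    (lam : ℝ) (hlam : 2 * ε / α < lam) :
    ∃ c : ℝ, 0 < c ∧ ∀ δ : ℝ, 0 < δ → ∀ (n : ℕ) (x y : X),
      (∀ i ≤ n, dist ((⇑f)^[i] x) ((⇑f)^[i] y) ≤ δ * Real.exp (-(lam * i))) →
      opNorm ((((coc (⇑f) A x n)⁻¹ * coc (⇑f) A y n : GL (Fin m) ℝ) :
        Matrix (Fin m) (Fin m) ℝ) - 1) ≤ c * δ ^ α :=
  close_orbits_forward_general f α hα A hH ε cε hcε hgrow lam hlam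
end
end

section
/- Let A, B ∈ GL(m,ℝ), let M ≥ 0 and 0 < ξ < 1/2. If d_G(A, Id) ≤ M and either ‖A^{−1}B − Id‖ ≤ ξ or ‖AB^{−1} − Id‖ ≤ ξ, then d_G(A, B) ≤ 3(M+1)·ξ. -/
noncomputable section

/-! With `u = A⁻¹B` one has `A − B = −A(u − 1)` and `A⁻¹ − B⁻¹ = (1 − u⁻¹)A⁻¹`, while
`‖A‖, ‖A⁻¹‖ ≤ 1 + M`. From `u⁻¹ − 1 = −u⁻¹(u − 1)` we get
`‖u⁻¹ − 1‖ ≤ (1 + ‖u⁻¹ − 1‖)ξ`, hence `‖u⁻¹ − 1‖ ≤ 2ξ` as soon as `ξ ≤ 1/2`.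
The case `‖AB⁻¹ − 1‖ ≤ ξ` is the first one for `A⁻¹, B⁻¹`, as `d_G` is invariant under inversion. -/

open scoped Matrix.Norms.L2Operator

section NormedRing

-- `‖1‖ ≤ 1` instead of `NormOneClass`, which fails for `0 × 0` matrices.
variable {R : Type*} [NormedRing R]

theorem norm_le_norm_sub_one_add_one (h1 : ‖(1 : R)‖ ≤ 1) (x : R) : ‖x‖ ≤ ‖x - 1‖ + 1 :=
  calc ‖x‖ = ‖(x - 1) + 1‖ := by rw [sub_add_cancel]
    _ ≤ ‖x - 1‖ + 1 := (norm_add_le _ _).trans (by gcongr)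

namespace Units

theorem norm_sub_le_norm_mul_norm_inv_mul_sub_one (a b : Rˣ) :
    ‖(a : R) - b‖ ≤ ‖(a : R)‖ * ‖((a⁻¹ * b : Rˣ) : R) - 1‖ := by
  have : (a : R) - b = -((a : R) * (((a⁻¹ * b : Rˣ) : R) - 1)) := by
    simp [mul_sub, ← mul_assoc]
  rw [this, norm_neg]
  exact norm_mul_le _ _

theorem norm_inv_sub_inv_le (a b : Rˣ) :
    ‖((a⁻¹ : Rˣ) : R) - ((b⁻¹ : Rˣ) : R)‖ ≤
      ‖(((a⁻¹ * b)⁻¹ : Rˣ) : R) - 1‖ * ‖((a⁻¹ : Rˣ) : R)‖ := by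
  have : ((a⁻¹ : Rˣ) : R) - ((b⁻¹ : Rˣ) : R) =
      (1 - (((a⁻¹ * b)⁻¹ : Rˣ) : R)) * ((a⁻¹ : Rˣ) : R) := by
    simp [sub_mul, mul_assoc]
  rw [this, ← norm_sub_rev 1]
  exact norm_mul_le _ _

theorem norm_inv_sub_one_le_two_mul (h1 : ‖(1 : R)‖ ≤ 1) (u : Rˣ) {ξ : ℝ} (hξ : ξ ≤ 1 / 2)
    (hu : ‖(u : R) - 1‖ ≤ ξ) : ‖((u⁻¹ : Rˣ) : R) - 1‖ ≤ 2 * ξ := by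
  have key : ((u⁻¹ : Rˣ) : R) - 1 = -(((u⁻¹ : Rˣ) : R) * ((u : R) - 1)) := by
    simp [mul_sub]
  have : ‖((u⁻¹ : Rˣ) : R) - 1‖ ≤ (‖((u⁻¹ : Rˣ) : R) - 1‖ + 1) * ξ := calc
    ‖((u⁻¹ : Rˣ) : R) - 1‖ ≤ ‖((u⁻¹ : Rˣ) : R)‖ * ‖(u : R) - 1‖ := by
      rw [key, norm_neg]; exact norm_mul_le _ _
    _ ≤ (‖((u⁻¹ : Rˣ) : R) - 1‖ + 1) * ξ := by
      gcongr
      exact norm_le_norm_sub_one_add_one h1 _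
  nlinarith [norm_nonneg (((u⁻¹ : Rˣ) : R) - 1)]

theorem norm_sub_add_norm_inv_sub_inv_le (h1 : ‖(1 : R)‖ ≤ 1) (a b : Rˣ) {M ξ : ℝ}
    (hξ : ξ ≤ 1 / 2) (ha : ‖(a : R) - 1‖ + ‖((a⁻¹ : Rˣ) : R) - 1‖ ≤ M)
    (h : ‖((a⁻¹ * b : Rˣ) : R) - 1‖ ≤ ξ) :
    ‖(a : R) - b‖ + ‖((a⁻¹ : Rˣ) : R) - ((b⁻¹ : Rˣ) : R)‖ ≤ 3 * (M + 1) * ξ := by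
  have hξ₀ : 0 ≤ ξ := (norm_nonneg _).trans h
  calc _ ≤ ‖(a : R)‖ * ξ + 2 * ξ * ‖((a⁻¹ : Rˣ) : R)‖ := by
        gcongr
        · exact (norm_sub_le_norm_mul_norm_inv_mul_sub_one a b).trans (by gcongr)
        · exact (norm_inv_sub_inv_le a b).trans
            (by gcongr; exact norm_inv_sub_one_le_two_mul h1 _ hξ h)
    _ ≤ (‖(a : R) - 1‖ + 1) * ξ + 2 * ξ * (‖((a⁻¹ : Rˣ) : R) - 1‖ + 1) := by
        gcongr <;> exact norm_le_norm_sub_one_add_one h1 _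
    _ ≤ 3 * (M + 1) * ξ := by
        nlinarith [norm_nonneg ((a : R) - 1), norm_nonneg (((a⁻¹ : Rˣ) : R) - 1)]

end Units

end NormedRing

theorem Matrix.l2_opNorm_one_le {𝕜 n : Type*} [RCLike 𝕜] [Fintype n] [DecidableEq n] :
    ‖(1 : Matrix n n 𝕜)‖ ≤ 1 := by
  rw [Matrix.cstar_norm_def, map_one]
  exact ContinuousLinearMap.norm_id_le

section GeneralLinearGroup

variable {m : ℕ}

theorem dG_eq_norm (A B : GL (Fin m) ℝ) :
    dG A B = ‖(A : Matrix (Fin m) (Fin m) ℝ) - B‖ +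
      ‖((A⁻¹ : GL (Fin m) ℝ) : Matrix (Fin m) (Fin m) ℝ) - ((B⁻¹ : GL (Fin m) ℝ) : _)‖ := rfl

theorem dG_inv_inv (A B : GL (Fin m) ℝ) : dG A⁻¹ B⁻¹ = dG A B := by
  rw [dG_eq_norm, dG_eq_norm, inv_inv, inv_inv, add_comm]

theorem dG_le_of_opNorm_inv_mul_sub_one_le {A B : GL (Fin m) ℝ} {M ξ : ℝ} (hξ : ξ ≤ 1 / 2)
    (hA : dG A 1 ≤ M)
    (h : opNorm (((A⁻¹ * B : GL (Fin m) ℝ) : Matrix (Fin m) (Fin m) ℝ) - 1) ≤ ξ) :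
    dG A B ≤ 3 * (M + 1) * ξ := by
  rw [dG_eq_norm, inv_one, Units.val_one] at hA
  exact Units.norm_sub_add_norm_inv_sub_inv_le Matrix.l2_opNorm_one_le A B hξ hA h

end GeneralLinearGroup

theorem dG_estimate_general {m : ℕ} (A B : GL (Fin m) ℝ) (M ξ : ℝ)
    (hξ2 : ξ < 1 / 2) (hA : dG A 1 ≤ M)
    (h : opNorm (((A⁻¹ * B : GL (Fin m) ℝ) : Matrix (Fin m) (Fin m) ℝ) - 1) ≤ ξ ∨
         opNorm (((A * B⁻¹ : GL (Fin m) ℝ) : Matrix (Fin m) (Fin m) ℝ) - 1) ≤ ξ) :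
    dG A B ≤ 3 * (M + 1) * ξ := by
  rcases h with h | h
  · exact dG_le_of_opNorm_inv_mul_sub_one_le hξ2.le hA h
  · rw [← dG_inv_inv]
    refine dG_le_of_opNorm_inv_mul_sub_one_le hξ2.le ?_ (by rwa [inv_inv])
    rwa [← inv_one, dG_inv_inv]

/-- **Matrix estimate (Lemma on `d_G`).** If `d_G(A, Id) ≤ M` and either
`‖A⁻¹B − Id‖ ≤ ξ` or `‖AB⁻¹ − Id‖ ≤ ξ` with `0 < ξ < 1/2`, then
`d_G(A, B) ≤ 3(M+1)ξ`. -/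
theorem dG_estimate {m : ℕ} (A B : GL (Fin m) ℝ) (M ξ : ℝ) (hM : 0 ≤ M)
    (hξ : 0 < ξ) (hξ2 : ξ < 1 / 2) (hA : dG A 1 ≤ M)
    (h : opNorm (((A⁻¹ * B : GL (Fin m) ℝ) : Matrix (Fin m) (Fin m) ℝ) - 1) ≤ ξ ∨
         opNorm (((A * B⁻¹ : GL (Fin m) ℝ) : Matrix (Fin m) (Fin m) ℝ) - 1) ≤ ξ) :
    dG A B ≤ 3 * (M + 1) * ξ :=
  dG_estimate_general A B M ξ hξ2 hA h
end
end

section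
/- Let X be a compact metric space, let f : X → X be a homeomorphism, and let 𝒜 be the cocycle generated by a continuous function A : X → GL(m,ℝ). Let z ∈ X have dense orbit {f^k z : k ∈ ℤ}, and suppose there is a constant M such that d_G(𝒜(z,k), Id) ≤ M for all k ∈ ℤ. Then there exists a constant M' such that d_G(𝒜(x,n), Id) ≤ M' for all x ∈ X and all n ∈ ℤ. -/
noncomputable section

/-! Writing `𝒜(f^k z, n) = 𝒜(z, n + k) 𝒜(z, k)⁻¹` by the cocycle identity, the bound along the
orbit of `z` bounds `d_G(𝒜(x, n), Id)` at every point `x = f^k z` of the orbit, uniformly in `k`;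
since `x ↦ d_G(𝒜(x, n), Id)` is continuous and the orbit is dense, the bound holds everywhere. -/

open scoped Matrix.Norms.L2Operator

section Cocycle

variable {X : Type*} {m : ℕ} (g : X → X) (A : X → GL (Fin m) ℝ)

lemma coc_succ_eq_mul_apply (x : X) (n : ℕ) : coc g A x (n + 1) = coc g A (g x) n * A x := by
  induction n with
  | zero => simp [coc]
  | succ k ih => rw [coc, ih, coc, ← mul_assoc, Function.iterate_succ_apply]

variable {g A} [TopologicalSpace X]

lemma continuous_coc (hg : Continuous g) (hA : Continuous A) (n : ℕ) :
    Continuous fun x => coc g A x n := by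
  induction n with
  | zero => exact continuous_const
  | succ k ih => exact (hA.comp (hg.iterate k)).mul ih

end Cocycle

section IntegerCocycle

variable {X : Type*} [TopologicalSpace X] {m : ℕ} (f : X ≃ₜ X) (A : X → GL (Fin m) ℝ)

lemma iterZ_eq_zpow (k : ℤ) : iterZ f k = ⇑(f.toEquiv ^ k) := by
  cases k with
  | ofNat n => simp [iterZ, Equiv.Perm.coe_pow]
  | negSucc n => simp [iterZ, zpow_negSucc, ← inv_pow, Equiv.Perm.coe_pow, Equiv.Perm.inv_def]

lemma iterZ_add (a b : ℤ) (x : X) : iterZ f (a + b) x = iterZ f a (iterZ f b x) := by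
  simp only [iterZ_eq_zpow, zpow_add, Equiv.Perm.mul_apply]

lemma cocZ_neg_natCast (x : X) (n : ℕ) : cocZ f A x (-n) = (coc f A (f.symm^[n] x) n)⁻¹ := by
  cases n with
  | zero => simp [cocZ, coc]
  | succ n => rfl

lemma cocZ_add_one (x : X) (n : ℤ) : cocZ f A x (n + 1) = A (iterZ f n x) * cocZ f A x n := by
  cases n with
  | ofNat n => rfl
  | negSucc n =>
    have hsucc : f (f.symm^[n + 1] x) = f.symm^[n] x := by
      rw [Function.iterate_succ_apply', f.apply_symm_apply]
    rw [show Int.negSucc n + 1 = -(n : ℤ) by omega, cocZ_neg_natCast, cocZ, iterZ,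
      coc_succ_eq_mul_apply, hsucc, mul_inv_rev, mul_inv_cancel_left]

lemma cocZ_add (x : X) (a b : ℤ) :
    cocZ f A x (a + b) = cocZ f A (iterZ f b x) a * cocZ f A x b := by
  induction a using Int.induction_on with
  | zero => simp [cocZ, coc]
  | succ k ih => rw [add_right_comm, cocZ_add_one, ih, cocZ_add_one, iterZ_add, mul_assoc]
  | pred k ih =>
    have hx := cocZ_add_one f A x (-k - 1 + b)
    have hy := cocZ_add_one f A (iterZ f b x) (-k - 1)
    rw [sub_add_cancel, ← iterZ_add] at hy
    rw [show -(k : ℤ) - 1 + b + 1 = -k + b by ring, ih, hy, mul_assoc] at hx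
    exact (mul_left_cancel hx).symm

lemma cocZ_iterZ (x : X) (k n : ℤ) :
    cocZ f A (iterZ f k x) n = cocZ f A x (n + k) * (cocZ f A x k)⁻¹ := by
  rw [cocZ_add, mul_inv_cancel_right]

variable {A} in
lemma continuous_cocZ (hA : Continuous A) (n : ℤ) : Continuous fun x => cocZ f A x n := by
  cases n with
  | ofNat n => exact continuous_coc f.continuous hA n
  | negSucc n =>
    exact ((continuous_coc f.continuous hA (n + 1)).comp (f.symm.continuous.iterate (n + 1))).inv

end IntegerCocycle

lemma Matrix.l2_opNorm_one_le_s16 {m : ℕ} : ‖(1 : Matrix (Fin m) (Fin m) ℝ)‖ ≤ 1 := by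
  rw [Matrix.cstar_norm_def, map_one, ContinuousLinearMap.one_def]
  exact ContinuousLinearMap.norm_id_le

section GeneralLinear

variable {m : ℕ}

lemma opNorm_eq_norm (P : Matrix (Fin m) (Fin m) ℝ) : opNorm P = ‖P‖ := rfl

lemma dG_one (U : GL (Fin m) ℝ) :
    dG U 1 = ‖(U : Matrix (Fin m) (Fin m) ℝ) - 1‖ +
      ‖((U⁻¹ : GL (Fin m) ℝ) : Matrix (Fin m) (Fin m) ℝ) - 1‖ := by
  simp only [dG, opNorm_eq_norm, inv_one, Units.val_one]

lemma dG_inv_one (U : GL (Fin m) ℝ) : dG U⁻¹ 1 = dG U 1 := by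
  rw [dG_one, dG_one, inv_inv, add_comm]

lemma continuous_dG_one : Continuous fun U : GL (Fin m) ℝ => dG U 1 := by
  simp only [dG_one]
  fun_prop

lemma norm_val_le_of_dG_one_le {U : GL (Fin m) ℝ} {M : ℝ} (h : dG U 1 ≤ M) :
    ‖(U : Matrix (Fin m) (Fin m) ℝ)‖ ≤ M + 1 := by
  rw [dG_one] at h
  linarith [norm_le_norm_add_norm_sub' (U : Matrix (Fin m) (Fin m) ℝ) 1,
    norm_nonneg (((U⁻¹ : GL (Fin m) ℝ) : Matrix (Fin m) (Fin m) ℝ) - 1),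
    Matrix.l2_opNorm_one_le_s16 (m := m)]

lemma dG_one_le (U : GL (Fin m) ℝ) :
    dG U 1 ≤ ‖(U : Matrix (Fin m) (Fin m) ℝ)‖ +
      ‖((U⁻¹ : GL (Fin m) ℝ) : Matrix (Fin m) (Fin m) ℝ)‖ + 2 := by
  rw [dG_one]
  linarith [norm_sub_le (U : Matrix (Fin m) (Fin m) ℝ) 1,
    norm_sub_le ((U⁻¹ : GL (Fin m) ℝ) : Matrix (Fin m) (Fin m) ℝ) 1,
    Matrix.l2_opNorm_one_le_s16 (m := m)]

lemma norm_val_mul_inv_le {U V : GL (Fin m) ℝ} {M : ℝ} (hU : dG U 1 ≤ M) (hV : dG V 1 ≤ M) :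
    ‖((U * V⁻¹ : GL (Fin m) ℝ) : Matrix (Fin m) (Fin m) ℝ)‖ ≤ (M + 1) ^ 2 := by
  rw [← dG_inv_one] at hV
  calc ‖((U * V⁻¹ : GL (Fin m) ℝ) : Matrix (Fin m) (Fin m) ℝ)‖
      ≤ ‖(U : Matrix (Fin m) (Fin m) ℝ)‖ * ‖((V⁻¹ : GL (Fin m) ℝ) : Matrix (Fin m) (Fin m) ℝ)‖ := by
        rw [Units.val_mul]; exact norm_mul_le _ _
    _ ≤ (M + 1) * (M + 1) :=
        mul_le_mul (norm_val_le_of_dG_one_le hU) (norm_val_le_of_dG_one_le hV) (norm_nonneg _)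
          ((norm_nonneg _).trans (norm_val_le_of_dG_one_le hU))
    _ = (M + 1) ^ 2 := (sq _).symm

lemma dG_mul_inv_one_le {U V : GL (Fin m) ℝ} {M : ℝ} (hU : dG U 1 ≤ M) (hV : dG V 1 ≤ M) :
    dG (U * V⁻¹) 1 ≤ 2 * (M + 1) ^ 2 + 2 := by
  have h := dG_one_le (U * V⁻¹)
  rw [show (U * V⁻¹)⁻¹ = V * U⁻¹ by group] at h
  linarith [norm_val_mul_inv_le hU hV, norm_val_mul_inv_le hV hU]

end GeneralLinear

theorem bounded_on_dense_orbit_general {X : Type*} [MetricSpace X] (f : X ≃ₜ X)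
    {m : ℕ} (A : X → GL (Fin m) ℝ) (hA : Continuous A)
    (z : X) (hz : Dense (Set.range fun k : ℤ => iterZ f k z))
    (M : ℝ) (hM : ∀ k : ℤ, dG (cocZ f A z k) 1 ≤ M) :
    ∃ M' : ℝ, ∀ (x : X) (n : ℤ), dG (cocZ f A x n) 1 ≤ M' := by
  refine ⟨2 * (M + 1) ^ 2 + 2, fun x n => ?_⟩
  have hclosed : IsClosed {x | dG (cocZ f A x n) 1 ≤ 2 * (M + 1) ^ 2 + 2} :=
    isClosed_le (continuous_dG_one.comp (continuous_cocZ f hA n)) continuous_const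
  refine hz.induction ?_ hclosed x
  rintro _ ⟨k, rfl⟩
  rw [cocZ_iterZ]
  exact dG_mul_inv_one_le (hM (n + k)) (hM k)

/-- **Boundedness along a dense orbit implies global boundedness.** If the cocycle
generated by a continuous `A` satisfies `d_G(𝒜(z,k), Id) ≤ M` along a dense two-sided
orbit of `z`, then `d_G(𝒜(x,n), Id)` is uniformly bounded over `x ∈ X`, `n ∈ ℤ`. -/
theorem bounded_on_dense_orbit {X : Type*} [MetricSpace X] [CompactSpace X] (f : X ≃ₜ X)
    {m : ℕ} (A : X → GL (Fin m) ℝ) (hA : Continuous A)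
    (z : X) (hz : Dense (Set.range fun k : ℤ => iterZ f k z))
    (M : ℝ) (hM : ∀ k : ℤ, dG (cocZ f A z k) 1 ≤ M) :
    ∃ M' : ℝ, ∀ (x : X) (n : ℤ), dG (cocZ f A x n) 1 ≤ M' :=
  bounded_on_dense_orbit_general f A hA z hz M hM
end
end
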